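/- In the proof of the Exchange Condition, the following conjugacy fact holds: let I, J ∈ S̄ and z ∈ W^Γ, and suppose there exists s ∈ I such that z^{-1} s z ∈ W_J. Then z^{-1} w_I z = w_J. -/

import Mathlib

open CoxeterSystem

/-- The subgroup of fixed points of a group `Γ` of automorphisms of `W`. -/
def fixedSubgroup {W : Type*} [Group W] (Γ : Subgroup (MulAut W)) : Subgroup W where
  carrier := {w | ∀ γ ∈ Γ, γ w = w}
  one_mem' := fun γ _ => map_one γ
  mul_mem' := fun {a b} ha hb γ hγ => by rw [map_mul, ha γ hγ, hb γ hγ]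
  inv_mem' := fun {a} ha γ hγ => by rw [map_inv, ha γ hγ]

/-- `I` is a `Γ`-orbit on the set `S` of simple reflections of `(W, S)` such that the
standard parabolic subgroup `W_I` generated by `I` is finite. -/
def IsFinParabolicOrbit {B W : Type*} [Group W] {M : CoxeterMatrix B}
    (cs : CoxeterSystem M W) (Γ : Subgroup (MulAut W)) (I : Set W) : Prop :=
  (∃ s ∈ Set.range cs.simple, I = {t | ∃ γ ∈ Γ, γ s = t}) ∧
    Finite ↥(Subgroup.closure I)

/-- `w` is the longest element of the standard parabolic subgroup `W_I` generated by `I`. -/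
def IsLongestIn {B W : Type*} [Group W] {M : CoxeterMatrix B}
    (cs : CoxeterSystem M W) (I : Set W) (w : W) : Prop :=
  w ∈ Subgroup.closure I ∧ ∀ u ∈ Subgroup.closure I, cs.length u ≤ cs.length w

/-!
Since `Γ` permutes the simple reflections it preserves length, so the longest element `w_I`,
the unique element of `W_I` having every element of `I` as a right descent, is `Γ`-fixed.
As `z` is `Γ`-fixed, the hypothesis on `s` spreads over the orbit `I`, so `y = z⁻¹ w_I z` lies
in `W_J`. It is `Γ`-fixed and nontrivial, so it has a right descent in `J`, and since `J` is a
single orbit every element of `J` is one. Hence `y = w_J`.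

The characterisation of longest elements rests on the exchange condition, which comes from the
reflection cocycle: `W` acts on `W × ZMod 2` by letting `s i` send `(t, ε)` to
`(s i * t * s i, ε + [t = s i])`, and the second coordinate of `w • (t, 0)` is the parity of the
number of occurrences of `t` in the right inversion sequence of any word for `w`.
-/

theorem mul_mul_inv_eq_iff_eq_inv_mul_mul {G : Type*} [Group G] {a x b : G} :
    a * x * a⁻¹ = b ↔ x = a⁻¹ * b * a := by
  constructor <;> intro h <;> [rw [← h]; rw [h]] <;> group

section TwistedConj

open Finset

variable {G : Type*} [Group G]

def twistedConj (g : G) (c : G → ZMod 2) : Equiv.Perm (G × ZMod 2) where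
  toFun p := (g * p.1 * g⁻¹, p.2 + c p.1)
  invFun p := (g⁻¹ * p.1 * g, p.2 - c (g⁻¹ * p.1 * g))
  left_inv p := by ext <;> simp [mul_assoc]
  right_inv p := by ext <;> simp [mul_assoc]

@[simp]
theorem twistedConj_apply (g : G) (c : G → ZMod 2) (p : G × ZMod 2) :
    twistedConj g c p = (g * p.1 * g⁻¹, p.2 + c p.1) := rfl

theorem twistedConj_one_zero : twistedConj (1 : G) 0 = 1 := by
  ext p <;> simp

theorem twistedConj_mul (g h : G) (c d : G → ZMod 2) :
    twistedConj g c * twistedConj h d =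
      twistedConj (g * h) fun t => d t + c (h * t * h⁻¹) := by
  ext p <;> simp [mul_assoc, add_assoc]

theorem twistedConj_pow (g : G) (c : G → ZMod 2) (m : ℕ) :
    twistedConj g c ^ m =
      twistedConj (g ^ m) fun t => ∑ k ∈ range m, c (g ^ k * t * (g ^ k)⁻¹) := by
  induction m with
  | zero =>
    simp only [pow_zero, range_zero, sum_empty]
    exact twistedConj_one_zero.symm
  | succ m ih =>
    rw [pow_succ, ih, twistedConj_mul, ← pow_succ]
    congr 1
    funext t
    rw [sum_range_succ', add_comm]
    simp [pow_succ, mul_assoc]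

end TwistedConj

section ParitySums

open Finset

theorem Finset.sum_range_even_add_odd {A : Type*} [AddCommMonoid A] (f : ℕ → A) (m : ℕ) :
    ∑ k ∈ range m, (f (2 * k) + f (2 * k + 1)) = ∑ l ∈ range (2 * m), f l := by
  induction m with
  | zero => simp
  | succ m ih => rw [sum_range_succ, ih, Nat.mul_succ, sum_range_succ, sum_range_succ, add_assoc]

theorem ZMod.sum_range_two_mul_eq_zero_of_periodic {f : ℕ → ZMod 2} {m : ℕ}
    (hf : Function.Periodic f m) : ∑ l ∈ range (2 * m), f l = 0 := by
  rw [two_mul, sum_range_add]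
  simp only [add_comm m, hf _]
  exact CharTwo.add_self_eq_zero _

end ParitySums

namespace CoxeterSystem

variable {B W : Type*} [Group W] {M : CoxeterMatrix B} (cs : CoxeterSystem M W)

local prefix:100 "s" => cs.simple
local prefix:100 "π" => cs.wordProd
local prefix:100 "ℓ" => cs.length

section Cocycle

open Finset

variable [DecidableEq W]

def reflRepSimple (i : B) : Equiv.Perm (W × ZMod 2) :=
  twistedConj (s i) fun t => if t = s i then 1 else 0

theorem isLiftable_reflRepSimple : M.IsLiftable cs.reflRepSimple := by
  intro i j
  rw [reflRepSimple, reflRepSimple, twistedConj_mul, twistedConj_pow, cs.simple_mul_simple_pow]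
  convert twistedConj_one_zero with t
  obtain ⟨p, hp⟩ : ∃ p, s i * s j = p := ⟨_, rfl⟩
  have hpow : p ^ M i j = 1 := hp ▸ cs.simple_mul_simple_pow i j
  have hflip (k : ℕ) : s j * p ^ k = (p ^ k)⁻¹ * s j := by
    have : s j * p * (s j)⁻¹ = p⁻¹ := by simp [← hp, mul_assoc]
    rw [← inv_pow, ← this, conj_pow, cs.inv_simple, mul_assoc, cs.simple_mul_simple_self, mul_one]
  -- the summands test `t` against `(p ^ l)⁻¹ * s j` for `l < 2 * M i j`, an `M i j`-periodic list
  have heven (k : ℕ) : (p ^ (2 * k))⁻¹ * s j = (p ^ k)⁻¹ * s j * p ^ k := by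
    rw [mul_assoc, hflip, two_mul, pow_add, mul_inv_rev, mul_assoc]
  have hodd (k : ℕ) : (p ^ (2 * k + 1))⁻¹ * s j = (p ^ k)⁻¹ * (s j * s i * s j) * p ^ k := by
    rw [show 2 * k + 1 = (k + 1) + k by ring, pow_add, mul_inv_rev, mul_assoc, ← hflip,
      pow_succ', ← hp]
    simp only [mul_assoc]
  have hperiodic :
      Function.Periodic (fun l => if t = (p ^ l)⁻¹ * s j then (1 : ZMod 2) else 0) (M i j) := by
    intro l
    simp only [pow_add, hpow, mul_one]
  rw [hp]
  simp only [mul_mul_inv_eq_iff_eq_inv_mul_mul]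
  simp only [cs.inv_simple, ← heven, ← hodd]
  exact (sum_range_even_add_odd _ _).trans (ZMod.sum_range_two_mul_eq_zero_of_periodic hperiodic)

def reflRep : W →* Equiv.Perm (W × ZMod 2) :=
  cs.lift ⟨cs.reflRepSimple, cs.isLiftable_reflRepSimple⟩

def reflCocycle (w t : W) : ZMod 2 :=
  (cs.reflRep w (t, 0)).2

theorem reflRep_eq_twistedConj (w : W) : cs.reflRep w = twistedConj w (cs.reflCocycle w) := by
  obtain ⟨c, hc⟩ : ∃ c, cs.reflRep w = twistedConj w c := by
    induction w using cs.simple_induction_left with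
    | one => exact ⟨0, by rw [map_one, twistedConj_one_zero]⟩
    | mul_simple_left w i ih =>
      obtain ⟨c, hc⟩ := ih
      rw [map_mul, hc, reflRep, lift_apply_simple, reflRepSimple, twistedConj_mul]
      exact ⟨_, rfl⟩
  have : cs.reflCocycle w = c := funext fun t => by simp [reflCocycle, hc]
  rw [hc, this]

theorem reflCocycle_mul (u v t : W) :
    cs.reflCocycle (u * v) t = cs.reflCocycle v t + cs.reflCocycle u (v * t * v⁻¹) := by
  have := congrArg (fun f => (f (t, 0)).2) (map_mul cs.reflRep u v)
  simpa [reflRep_eq_twistedConj, twistedConj_mul] using this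

theorem reflCocycle_simple (i : B) (t : W) :
    cs.reflCocycle (s i) t = if t = s i then 1 else 0 := by
  simp [reflCocycle, reflRep, reflRepSimple]

theorem reflCocycle_wordProd (ω : List B) (t : W) :
    cs.reflCocycle (π ω) t = (cs.rightInvSeq ω).count t := by
  induction ω with
  | nil => simp [reflCocycle]
  | cons i ω ih =>
    have hconj : π ω * t * (π ω)⁻¹ = s i ↔ (π ω)⁻¹ * s i * π ω = t :=
      mul_mul_inv_eq_iff_eq_inv_mul_mul.trans eq_comm
    simp [wordProd_cons, reflCocycle_mul, ih, reflCocycle_simple, rightInvSeq, List.count_cons,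
      hconj]

theorem mem_rightInvSeq_of_reflCocycle_eq_one {ω : List B} {t : W}
    (h : cs.reflCocycle (π ω) t = 1) : t ∈ cs.rightInvSeq ω := by
  refine List.count_pos_iff.mp (Nat.pos_of_ne_zero fun h0 => ?_)
  rw [reflCocycle_wordProd, h0, Nat.cast_zero] at h
  exact zero_ne_one h

theorem length_mul_lt_of_reflCocycle_eq_one {w t : W} (h : cs.reflCocycle w t = 1) :
    ℓ (w * t) < ℓ w := by
  obtain ⟨ω, hω, rfl⟩ := cs.exists_isReduced w
  exact (cs.isRightInversion_of_mem_rightInvSeq hω (cs.mem_rightInvSeq_of_reflCocycle_eq_one h)).2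

theorem reflCocycle_simple_eq_one_iff {w : W} {i : B} :
    cs.reflCocycle w (s i) = 1 ↔ cs.IsRightDescent w i := by
  refine ⟨cs.length_mul_lt_of_reflCocycle_eq_one, fun hdesc => ?_⟩
  by_contra h
  have h0 : cs.reflCocycle w (s i) = 0 := (by decide : ∀ x : ZMod 2, x ≠ 1 → x = 0) _ h
  have h1 : cs.reflCocycle (w * s i) (s i) = 1 := by
    simp [reflCocycle_mul, reflCocycle_simple, h0]
  have := cs.length_mul_lt_of_reflCocycle_eq_one h1
  rw [simple_mul_simple_cancel_right] at this
  exact lt_asymm this hdesc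

end Cocycle

section Exchange

theorem mem_rightInvSeq_of_isRightDescent {ω : List B} {i : B}
    (h : cs.IsRightDescent (π ω) i) : s i ∈ cs.rightInvSeq ω := by
  classical
  exact cs.mem_rightInvSeq_of_reflCocycle_eq_one (cs.reflCocycle_simple_eq_one_iff.mpr h)

theorem exists_isReduced_sublist (ω : List B) :
    ∃ ω' : List B, ω'.Sublist ω ∧ cs.IsReduced ω' ∧ π ω' = π ω := by
  induction ω using List.reverseRecOn with
  | nil => exact ⟨[], List.Sublist.refl _, by simp [IsReduced], rfl⟩
  | append_singleton ω i ih =>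
    obtain ⟨ω', hsub, hred, hprod⟩ := ih
    have hprod' : π (ω ++ [i]) = π ω' * s i := by rw [wordProd_append, wordProd_singleton, hprod]
    rcases cs.length_mul_simple (π ω') i with hup | hdown
    · refine ⟨ω' ++ [i], hsub.append (List.Sublist.refl _), ?_, ?_⟩
      · rw [IsReduced, wordProd_append, wordProd_singleton, hup, hred.eq, List.length_append,
          List.length_singleton]
      · rw [wordProd_append, wordProd_singleton, hprod']
    · have hdesc : cs.IsRightDescent (π ω') i := by unfold IsRightDescent; omega
      obtain ⟨k, hk, hkt⟩ := List.mem_iff_getElem.mp (cs.mem_rightInvSeq_of_isRightDescent hdesc)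
      have hdel : π (ω'.eraseIdx k) = π ω' * s i := by
        rw [← wordProd_mul_getD_rightInvSeq, List.getD_eq_getElem _ _ hk, hkt]
      rw [length_rightInvSeq] at hk
      refine ⟨ω'.eraseIdx k, ?_, ?_, by rw [hdel, hprod']⟩
      · exact (List.eraseIdx_sublist _ _).trans (hsub.trans (List.sublist_append_left _ _))
      · have := List.length_eraseIdx_add_one hk
        have := hred.eq
        rw [IsReduced, hdel]
        omega

theorem length_mul_simple_mul_lt {w u : W} {i : B} (hw : cs.IsRightDescent w i)
    (hu : ¬cs.IsLeftDescent u i) : ℓ (w * s i * u) < ℓ (w * u) := by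
  classical
  have hconj : u * (u⁻¹ * s i * u) * u⁻¹ = s i := by group
  have hu0 : cs.reflCocycle u (u⁻¹ * s i * u) = 0 := by
    by_contra h
    apply hu
    have := cs.length_mul_lt_of_reflCocycle_eq_one ((by decide : ∀ x : ZMod 2, x ≠ 0 → x = 1) _ h)
    rwa [show u * (u⁻¹ * s i * u) = s i * u by group] at this
  have h1 : cs.reflCocycle (w * u) (u⁻¹ * s i * u) = 1 := by
    rw [reflCocycle_mul, hu0, hconj, cs.reflCocycle_simple_eq_one_iff.mpr hw, zero_add]
  have := cs.length_mul_lt_of_reflCocycle_eq_one h1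
  rwa [show w * u * (u⁻¹ * s i * u) = w * s i * u by group] at this

end Exchange

section Parabolic

variable {K : Set W}

theorem exists_wordProd_eq_of_mem_closure (hK : K ⊆ Set.range cs.simple) {u : W}
    (hu : u ∈ Subgroup.closure K) : ∃ ω : List B, (∀ i ∈ ω, s i ∈ K) ∧ π ω = u := by
  induction hu using Subgroup.closure_induction with
  | mem x hx =>
    obtain ⟨i, rfl⟩ := hK hx
    exact ⟨[i], by simpa using hx, wordProd_singleton cs i⟩
  | one => exact ⟨[], by simp, wordProd_nil cs⟩
  | mul x y _ _ ihx ihy =>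
    obtain ⟨ω₁, h₁, rfl⟩ := ihx
    obtain ⟨ω₂, h₂, rfl⟩ := ihy
    exact ⟨ω₁ ++ ω₂, fun i hi => (List.mem_append.mp hi).elim (h₁ i) (h₂ i), wordProd_append cs _ _⟩
  | inv x _ ihx =>
    obtain ⟨ω, h, rfl⟩ := ihx
    exact ⟨ω.reverse, fun i hi => h i (List.mem_reverse.mp hi), wordProd_reverse cs ω⟩

theorem exists_isReduced_of_mem_closure (hK : K ⊆ Set.range cs.simple) {u : W}
    (hu : u ∈ Subgroup.closure K) :
    ∃ ω : List B, (∀ i ∈ ω, s i ∈ K) ∧ cs.IsReduced ω ∧ π ω = u := by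
  obtain ⟨ω, hωK, rfl⟩ := cs.exists_wordProd_eq_of_mem_closure hK hu
  obtain ⟨ω', hsub, hred, hprod⟩ := cs.exists_isReduced_sublist ω
  exact ⟨ω', fun i hi => hωK i (hsub.subset hi), hred, hprod⟩

theorem exists_isRightDescent_of_mem_closure (hK : K ⊆ Set.range cs.simple) {u : W}
    (hu : u ∈ Subgroup.closure K) (hne : u ≠ 1) : ∃ i, s i ∈ K ∧ cs.IsRightDescent u i := by
  obtain ⟨ω, hωK, hred, rfl⟩ := cs.exists_isReduced_of_mem_closure hK hu
  obtain ⟨ω, i, rfl⟩ := (List.eq_nil_or_concat' ω).resolve_left (by rintro rfl; exact hne rfl)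
  refine ⟨i, hωK i (by simp), ?_⟩
  have := cs.length_wordProd_le ω
  rw [IsRightDescent, wordProd_append, wordProd_singleton, simple_mul_simple_cancel_right,
    ← wordProd_singleton, ← wordProd_append, hred.eq, List.length_append, List.length_singleton]
  omega

theorem length_mul_add_length_of_forall_isRightDescent (hK : K ⊆ Set.range cs.simple) {w u : W}
    (hw : ∀ i, s i ∈ K → cs.IsRightDescent w i) (hu : u ∈ Subgroup.closure K) :
    ℓ (w * u) + ℓ u = ℓ w := by
  obtain ⟨ω, hωK, hred, rfl⟩ := cs.exists_isReduced_of_mem_closure hK hu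
  clear hu
  induction ω with
  | nil => simp
  | cons i ω ih =>
    have hred' : cs.IsReduced ω := by simpa using hred.drop 1
    have ih := ih (fun j hj => hωK j (List.mem_cons_of_mem _ hj)) hred'
    have hnot : ¬cs.IsLeftDescent (π ω) i := by
      rw [IsLeftDescent, ← wordProd_cons, hred.eq, hred'.eq]
      simp
    have hlt := cs.length_mul_simple_mul_lt (hw i (hωK i List.mem_cons_self)) hnot
    have hlen : ℓ (s i * π ω) = ω.length + 1 := by rw [← wordProd_cons]; exact hred.eq
    have hge := cs.length_le_length_mul_add_right w (s i * π ω)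
    rw [← mul_assoc, hlen] at hge
    rw [wordProd_cons, ← mul_assoc, hlen]
    rw [hred'.eq] at ih
    omega

theorem eq_of_forall_isRightDescent (hK : K ⊆ Set.range cs.simple) {w v : W}
    (hw : ∀ i, s i ∈ K → cs.IsRightDescent w i) (hwK : w ∈ Subgroup.closure K)
    (hvK : v ∈ Subgroup.closure K) (hle : ℓ w ≤ ℓ v) : v = w := by
  have h := cs.length_mul_add_length_of_forall_isRightDescent hK hw (mul_mem (inv_mem hwK) hvK)
  rw [mul_inv_cancel_left] at h
  exact (inv_mul_eq_one.mp (cs.length_eq_zero_iff.mp (by omega))).symm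

end Parabolic

theorem length_map_le (f : W →* W) (hf : ∀ i, f (s i) ∈ Set.range cs.simple) (w : W) :
    ℓ (f w) ≤ ℓ w := by
  choose g hg using hf
  obtain ⟨ω, hω, rfl⟩ := cs.exists_isReduced w
  have hmap : f (π ω) = π (ω.map g) := by
    simp only [wordProd, map_list_prod, List.map_map, Function.comp_def, hg]
  rw [hmap, hω.eq, ← List.length_map g]
  exact cs.length_wordProd_le _

theorem length_map_of_image_eq (γ : MulAut W) (hγ : ⇑γ '' Set.range cs.simple = Set.range cs.simple)
    (w : W) : ℓ (γ w) = ℓ w := by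
  refine le_antisymm (cs.length_map_le γ.toMonoidHom (fun i => ?_) w) ?_
  · exact hγ ▸ Set.mem_image_of_mem γ (Set.mem_range_self i)
  · have hsymm (i : B) : γ.symm (s i) ∈ Set.range cs.simple := by
      obtain ⟨x, hx, hxi⟩ := hγ.symm ▸ Set.mem_range_self i
      rw [← hxi, MulEquiv.symm_apply_apply]
      exact hx
    simpa using cs.length_map_le γ.symm.toMonoidHom hsymm (γ w)

end CoxeterSystem

namespace IsLongestIn

variable {B W : Type*} [Group W] {M : CoxeterMatrix B} {cs : CoxeterSystem M W} {K : Set W}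
  {w : W}

theorem isRightDescent (h : IsLongestIn cs K w) {i : B} (hi : cs.simple i ∈ K) :
    cs.IsRightDescent w i :=
  lt_of_le_of_ne (h.2 _ (mul_mem h.1 (Subgroup.subset_closure hi))) (cs.length_mul_simple_ne w i)

theorem ne_one (h : IsLongestIn cs K w) (hK : K ⊆ Set.range cs.simple) {t : W} (ht : t ∈ K) :
    w ≠ 1 := by
  rintro rfl
  obtain ⟨i, rfl⟩ := hK ht
  have := h.2 _ (Subgroup.subset_closure ht)
  rw [cs.length_simple, cs.length_one] at this
  omega

end IsLongestIn

namespace IsFinParabolicOrbit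

variable {B W : Type*} [Group W] {M : CoxeterMatrix B} {cs : CoxeterSystem M W}
  {Γ : Subgroup (MulAut W)} {I J : Set W}

theorem subset_range_simple (hI : IsFinParabolicOrbit cs Γ I)
    (hΓ : ∀ γ ∈ Γ, ⇑γ '' Set.range cs.simple = Set.range cs.simple) : I ⊆ Set.range cs.simple := by
  obtain ⟨⟨s, hs, rfl⟩, -⟩ := hI
  rintro _ ⟨γ, hγ, rfl⟩
  exact hΓ γ hγ ▸ Set.mem_image_of_mem γ hs

theorem map_mem (hI : IsFinParabolicOrbit cs Γ I) {γ : MulAut W} (hγ : γ ∈ Γ) {t : W}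
    (ht : t ∈ I) : γ t ∈ I := by
  obtain ⟨⟨s, -, rfl⟩, -⟩ := hI
  obtain ⟨δ, hδ, rfl⟩ := ht
  exact ⟨γ * δ, mul_mem hγ hδ, rfl⟩

theorem exists_map_eq (hI : IsFinParabolicOrbit cs Γ I) {t t' : W} (ht : t ∈ I) (ht' : t' ∈ I) :
    ∃ γ ∈ Γ, γ t = t' := by
  obtain ⟨⟨s, -, rfl⟩, -⟩ := hI
  obtain ⟨δ, hδ, rfl⟩ := ht
  obtain ⟨δ', hδ', rfl⟩ := ht'
  exact ⟨δ' * δ⁻¹, mul_mem hδ' (inv_mem hδ), by simp⟩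

theorem map_mem_closure (hI : IsFinParabolicOrbit cs Γ I) {γ : MulAut W} (hγ : γ ∈ Γ) {x : W}
    (hx : x ∈ Subgroup.closure I) : γ x ∈ Subgroup.closure I := by
  have := Subgroup.mem_map_of_mem γ.toMonoidHom hx
  rw [MonoidHom.map_closure] at this
  exact Subgroup.closure_mono (Set.image_subset_iff.mpr fun t ht => hI.map_mem hγ ht) this

theorem conj_mem_closure (hI : IsFinParabolicOrbit cs Γ I) (hJ : IsFinParabolicOrbit cs Γ J)
    {z : W} (hz : z ∈ fixedSubgroup Γ) {s : W} (hs : s ∈ I) (h : z⁻¹ * s * z ∈ Subgroup.closure J)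
    {x : W} (hx : x ∈ Subgroup.closure I) : z⁻¹ * x * z ∈ Subgroup.closure J := by
  suffices Subgroup.closure I ≤ (Subgroup.closure J).comap (MulAut.conj z⁻¹).toMonoidHom by
    simpa using this hx
  rw [Subgroup.closure_le]
  intro t ht
  obtain ⟨γ, hγ, rfl⟩ := hI.exists_map_eq hs ht
  have : z⁻¹ * γ s * z = γ (z⁻¹ * s * z) := by simp [hz γ hγ]
  simpa [this] using hJ.map_mem_closure hγ h

theorem isRightDescent_of_forall_map_eq (hJ : IsFinParabolicOrbit cs Γ J)
    (hΓ : ∀ γ ∈ Γ, ⇑γ '' Set.range cs.simple = Set.range cs.simple) {y : W}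
    (hy : ∀ γ ∈ Γ, γ y = y) {i j : B}
    (hi : cs.simple i ∈ J) (hj : cs.simple j ∈ J) (hdesc : cs.IsRightDescent y i) :
    cs.IsRightDescent y j := by
  obtain ⟨γ, hγ, hγj⟩ := hJ.exists_map_eq hi hj
  rw [IsRightDescent, ← hγj, ← hy γ hγ, ← map_mul, cs.length_map_of_image_eq γ (hΓ γ hγ),
    cs.length_map_of_image_eq γ (hΓ γ hγ)]
  exact hdesc

end IsFinParabolicOrbit

theorem conj_longest_eq_longest_general {B W : Type*} [Group W] {M : CoxeterMatrix B}
    (cs : CoxeterSystem M W) (Γ : Subgroup (MulAut W))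
    (hΓ : ∀ γ ∈ Γ, ⇑γ '' Set.range cs.simple = Set.range cs.simple)
    (wI : Set W → W)
    (hwI : ∀ I : Set W, IsFinParabolicOrbit cs Γ I → IsLongestIn cs I (wI I))
    (I J : Set W) (hI : IsFinParabolicOrbit cs Γ I) (hJ : IsFinParabolicOrbit cs Γ J)
    (z : W) (hz : z ∈ fixedSubgroup Γ)
    (s : W) (hs : s ∈ I) (h : z⁻¹ * s * z ∈ Subgroup.closure J) :
    z⁻¹ * wI I * z = wI J := by
  have hIS := hI.subset_range_simple hΓ
  have hJS := hJ.subset_range_simple hΓ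
  have hwIfix (γ) (hγ : γ ∈ Γ) : γ (wI I) = wI I :=
    cs.eq_of_forall_isRightDescent hIS (fun _ => (hwI I hI).isRightDescent) (hwI I hI).1
      (hI.map_mem_closure hγ (hwI I hI).1) (cs.length_map_of_image_eq γ (hΓ γ hγ) _).ge
  set y := z⁻¹ * wI I * z with hy
  have hyJ : y ∈ Subgroup.closure J := hI.conj_mem_closure hJ hz hs h (hwI I hI).1
  have hyfix (γ) (hγ : γ ∈ Γ) : γ y = y := by simp [hy, hz γ hγ, hwIfix γ hγ]
  have hy1 : y ≠ 1 := fun hy1 =>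
    (hwI I hI).ne_one hIS hs ((conj_eq_one_iff (a := z⁻¹)).mp (by rwa [inv_inv]))
  obtain ⟨i, hiJ, hi⟩ := cs.exists_isRightDescent_of_mem_closure hJS hyJ hy1
  have hydesc (j) (hj : cs.simple j ∈ J) : cs.IsRightDescent y j :=
    hJ.isRightDescent_of_forall_map_eq hΓ hyfix hiJ hj hi
  exact (cs.eq_of_forall_isRightDescent hJS hydesc hyJ (hwI J hJ).1 ((hwI J hJ).2 y hyJ)).symm

/-- if `I, J ∈ S̄`, `z ∈ W^Γ` and `z⁻¹ s z ∈ W_J` for some `s ∈ I`, then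
`z⁻¹ w_I z = w_J`. -/
theorem conj_longest_eq_longest {B W : Type*} [Finite B] [Group W] {M : CoxeterMatrix B}
    (cs : CoxeterSystem M W) (Γ : Subgroup (MulAut W))
    (hΓ : ∀ γ ∈ Γ, ⇑γ '' Set.range cs.simple = Set.range cs.simple)
    (wI : Set W → W)
    (hwI : ∀ I : Set W, IsFinParabolicOrbit cs Γ I → IsLongestIn cs I (wI I))
    (I J : Set W) (hI : IsFinParabolicOrbit cs Γ I) (hJ : IsFinParabolicOrbit cs Γ J)
    (z : W) (hz : z ∈ fixedSubgroup Γ)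
    (s : W) (hs : s ∈ I) (h : z⁻¹ * s * z ∈ Subgroup.closure J) :
    z⁻¹ * wI I * z = wI J :=
  conj_longest_eq_longest_general cs Γ hΓ wI hwI I J hI hJ z hz s hs h
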